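/- (Theorem 3.3(iii); full high-energy expansion of the scattering amplitude, d=3.) For every M ∈ ℕ there exist constants C > 0 and κ₀ > 0 such that for all κ ≥ κ₀ the matrix A(κ) is invertible and for all k, ℓ ∈ ℝ³ with |k| = |ℓ| = κ one has |f(k,ℓ) + (i/(2π²)) Σ_{m=0}^M (−4πi)^m C_m(k,ℓ) κ^{−m−1}| ≤ C κ^{−M−2}. -/

import Mathlib

/-!
Write `A(κ) = W(κ) - (iκ/4π) 1 = -(iκ/4π) (1 - X(κ))` with `X(κ) = (-4πi/κ) W(κ)`. The
off-diagonal entries of `W(κ)` only change phase with `κ`, so its row-sum norm is independent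
of `κ` and `‖X(κ)‖ = O(1/κ)`. For large `κ` the Neumann series of `(1 - X(κ))⁻¹` converges,
which makes `A(κ)` invertible; its first `M + 1` terms produce exactly the coefficients `C_m`,
and the tail is `O(κ^{-M-1})`, which the prefactor `4π/κ` turns into `O(κ^{-M-2})`.
-/

open Complex Finset Matrix

noncomputable section

/-- The matrix `A(κ)` for a three-dimensional multipoint potential:
`A(κ)_{jj} = α_j - iκ/(4π)`,
`A(κ)_{jj'} = -e^{iκ‖y_j - y_{j'}‖}/(4π‖y_j - y_{j'}‖)` for `j ≠ j'`. -/
def A3 (n : ℕ) (y : Fin n → EuclideanSpace ℝ (Fin 3)) (α : Fin n → ℂ) (κ : ℝ) :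
    Matrix (Fin n) (Fin n) ℂ :=
  fun j j' =>
    if j = j' then α j - Complex.I * κ / (4 * Real.pi)
    else -Complex.exp (Complex.I * κ * ‖y j - y j'‖) / (4 * Real.pi * ‖y j - y j'‖)

/-- `q(k) = A(κ)⁻¹ b(k)` with `b(k)_j = -e^{i k·y_j}`. -/
def q3 (n : ℕ) (y : Fin n → EuclideanSpace ℝ (Fin 3)) (α : Fin n → ℂ) (κ : ℝ)
    (k : EuclideanSpace ℝ (Fin 3)) : Fin n → ℂ :=
  (A3 n y α κ)⁻¹ *ᵥ fun j => -Complex.exp (Complex.I * (inner ℝ k (y j) : ℝ))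

/-- The scattering amplitude `f(k,ℓ) = (2π)⁻³ Σ_j q_j(k) e^{-iℓ·y_j}`. -/
def f3 (n : ℕ) (y : Fin n → EuclideanSpace ℝ (Fin 3)) (α : Fin n → ℂ) (κ : ℝ)
    (k ℓ : EuclideanSpace ℝ (Fin 3)) : ℂ :=
  ((2 * Real.pi : ℂ) ^ 3)⁻¹ *
    ∑ j, q3 n y α κ k j * Complex.exp (-Complex.I * (inner ℝ ℓ (y j) : ℝ))

/-- The matrix `W(κ)`: `W(κ)_{jj} = α_j`,
`W(κ)_{jj'} = -e^{iκ‖y_j - y_{j'}‖}/(4π‖y_j - y_{j'}‖)` for `j ≠ j'`. -/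
def W3 (n : ℕ) (y : Fin n → EuclideanSpace ℝ (Fin 3)) (α : Fin n → ℂ) (κ : ℝ) :
    Matrix (Fin n) (Fin n) ℂ :=
  fun j j' =>
    if j = j' then α j
    else -Complex.exp (Complex.I * κ * ‖y j - y j'‖) / (4 * Real.pi * ‖y j - y j'‖)

/-- The coefficients `C_m(k,ℓ) = Σ_{j,j'} [W(κ)^m]_{jj'} e^{i(k·y_{j'} - ℓ·y_j)}`. -/
def C3coef (n : ℕ) (y : Fin n → EuclideanSpace ℝ (Fin 3)) (α : Fin n → ℂ) (κ : ℝ)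
    (m : ℕ) (k ℓ : EuclideanSpace ℝ (Fin 3)) : ℂ :=
  ∑ j, ∑ j', (W3 n y α κ ^ m) j j' *
    Complex.exp (Complex.I * ((inner ℝ k (y j') : ℝ) - (inner ℝ ℓ (y j) : ℝ)))

theorem norm_pow_mul_le {R : Type*} [NormedRing R] (x y : R) (N : ℕ) :
    ‖x ^ N * y‖ ≤ ‖x‖ ^ N * ‖y‖ := by
  induction N with
  | zero => simp
  | succ N ih =>
    calc ‖x ^ (N + 1) * y‖ = ‖x * (x ^ N * y)‖ := by rw [pow_succ', mul_assoc]
      _ ≤ ‖x‖ * (‖x‖ ^ N * ‖y‖) := (norm_mul_le _ _).trans (by gcongr)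
      _ = ‖x‖ ^ (N + 1) * ‖y‖ := by ring

theorem NormedRing.norm_inverse_one_sub_sub_geom_sum_le {R : Type*} [NormedRing R]
    [HasSummableGeomSeries R] {x : R} (hx : ‖x‖ < 1) (N : ℕ) :
    ‖Ring.inverse (1 - x) - ∑ i ∈ range N, x ^ i‖ ≤
      ‖x‖ ^ N * (‖(1 : R)‖ - 1 + (1 - ‖x‖)⁻¹) := by
  conv_lhs => rw [inverse_one_sub_nth_order' N hx, add_sub_cancel_left]
  have hinv : ‖Ring.inverse (1 - x)‖ ≤ ‖(1 : R)‖ - 1 + (1 - ‖x‖)⁻¹ := by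
    rw [← geom_series_eq_inverse x hx]
    exact tsum_geometric_le_of_norm_lt_one x hx
  exact (norm_pow_mul_le _ _ N).trans (by gcongr)

theorem inverse_one_sub_smul_mul_sub_smul_one {K A : Type*} [Field K] [Ring A] [Algebra K A]
    (W : A) {t : K} (ht : t ≠ 0) (h : IsUnit (1 - t • W)) :
    (-t • Ring.inverse (1 - t • W)) * (W - t⁻¹ • 1) = 1 := by
  have hfactor : W - t⁻¹ • (1 : A) = -t⁻¹ • (1 - t • W) := by
    rw [smul_sub, smul_smul, neg_mul, inv_mul_cancel₀ ht]
    simp only [neg_smul, one_smul]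
    abel
  rw [hfactor, smul_mul_smul_comm, neg_mul_neg, mul_inv_cancel₀ ht, one_smul,
    Ring.inverse_mul_cancel _ h]

theorem norm_dotProduct_le {ι α : Type*} [Fintype ι] [NonUnitalSeminormedRing α]
    (u v : ι → α) : ‖u ⬝ᵥ v‖ ≤ Fintype.card ι * (‖u‖ * ‖v‖) := by
  calc ‖u ⬝ᵥ v‖ ≤ ∑ i, ‖u i‖ * ‖v i‖ :=
        (norm_sum_le _ _).trans (sum_le_sum fun i _ => norm_mul_le _ _)
    _ ≤ ∑ _i : ι, ‖u‖ * ‖v‖ := sum_le_sum fun i _ =>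
        mul_le_mul (norm_le_pi_norm u i) (norm_le_pi_norm v i) (norm_nonneg _) (norm_nonneg _)
    _ = Fintype.card ι * (‖u‖ * ‖v‖) := by simp

section Scattering

attribute [local instance] Matrix.linftyOpNormedAddCommGroup Matrix.linftyOpNormedRing
  Matrix.linftyOpNormedSpace

variable {n : ℕ} (y : Fin n → EuclideanSpace ℝ (Fin 3)) (α : Fin n → ℂ)

def planeWave (k : EuclideanSpace ℝ (Fin 3)) : Fin n → ℂ :=
  fun j => Complex.exp (Complex.I * (inner ℝ k (y j) : ℝ))

def X3 (κ : ℝ) : Matrix (Fin n) (Fin n) ℂ :=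
  (-4 * Real.pi * Complex.I / κ) • W3 n y α κ

theorem norm_planeWave_le (k : EuclideanSpace ℝ (Fin 3)) : ‖planeWave y k‖ ≤ 1 :=
  (pi_norm_le_iff_of_nonneg zero_le_one).2 fun _ => (norm_exp_I_mul_ofReal _).le

theorem norm_mulVec_planeWave_dotProduct_le (B : Matrix (Fin n) (Fin n) ℂ)
    (k ℓ : EuclideanSpace ℝ (Fin 3)) : ‖B *ᵥ planeWave y k ⬝ᵥ planeWave y ℓ‖ ≤ n * ‖B‖ := by
  calc ‖B *ᵥ planeWave y k ⬝ᵥ planeWave y ℓ‖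
      ≤ n * (‖B *ᵥ planeWave y k‖ * ‖planeWave y ℓ‖) := by
        simpa using norm_dotProduct_le (B *ᵥ planeWave y k) (planeWave y ℓ)
    _ ≤ n * (‖B‖ * 1 * 1) := by
        gcongr
        · exact (linfty_opNorm_mulVec _ _).trans (by gcongr; exact norm_planeWave_le y k)
        · exact norm_planeWave_le y ℓ
    _ = n * ‖B‖ := by ring

theorem f3_eq_dotProduct (κ : ℝ) (k ℓ : EuclideanSpace ℝ (Fin 3)) :
    f3 n y α κ k ℓ =
      -((2 * Real.pi : ℂ) ^ 3)⁻¹ * ((A3 n y α κ)⁻¹ *ᵥ planeWave y k ⬝ᵥ planeWave y (-ℓ)) := by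
  have hb : (fun j => -Complex.exp (Complex.I * (inner ℝ k (y j) : ℝ))) = -planeWave y k := rfl
  rw [f3, q3, hb, Matrix.mulVec_neg, neg_mul, ← mul_neg, ← neg_dotProduct]
  simp only [dotProduct, planeWave, inner_neg_left, ofReal_neg, mul_neg, neg_mul]

theorem C3coef_eq_dotProduct (κ : ℝ) (m : ℕ) (k ℓ : EuclideanSpace ℝ (Fin 3)) :
    C3coef n y α κ m k ℓ = W3 n y α κ ^ m *ᵥ planeWave y k ⬝ᵥ planeWave y (-ℓ) := by
  simp only [C3coef, planeWave, dotProduct, Matrix.mulVec, inner_neg_left, Finset.sum_mul,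
    mul_assoc, ← Complex.exp_add, ofReal_neg, mul_neg, sub_eq_add_neg, mul_add]

theorem A3_eq_W3_sub_smul_one (κ : ℝ) :
    A3 n y α κ = W3 n y α κ - (-4 * Real.pi * Complex.I / κ)⁻¹ • 1 := by
  have hπ : (Real.pi : ℂ) ≠ 0 := by exact_mod_cast Real.pi_ne_zero
  ext j j'
  by_cases h : j = j'
  · subst h
    simp only [A3, W3, if_true, Matrix.sub_apply, Matrix.smul_apply, Matrix.one_apply_eq,
      smul_eq_mul, mul_one, inv_div]
    congr 1
    rw [div_eq_div_iff (by simp [hπ]) (by simp [hπ, I_ne_zero])]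
    linear_combination (-4 * Real.pi * κ : ℂ) * I_sq
  · simp [A3, W3, h]

theorem smul_inverse_one_sub_X3_mul_A3 {κ : ℝ} (hκ : κ ≠ 0) (h : IsUnit (1 - X3 y α κ)) :
    (-(-4 * Real.pi * Complex.I / κ) • Ring.inverse (1 - X3 y α κ)) * A3 n y α κ = 1 := by
  rw [A3_eq_W3_sub_smul_one]
  exact inverse_one_sub_smul_mul_sub_smul_one _ (by simp [hκ, Real.pi_ne_zero, I_ne_zero]) h

theorem isUnit_A3 {κ : ℝ} (hκ : κ ≠ 0) (h : ‖X3 y α κ‖ < 1) : IsUnit (A3 n y α κ) :=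
  (isUnit_iff_isUnit_det _).2 <| isUnit_det_of_left_inverse <|
    smul_inverse_one_sub_X3_mul_A3 y α hκ (Units.oneSub _ h).isUnit

theorem norm_W3_apply (κ : ℝ) (j j' : Fin n) : ‖W3 n y α κ j j'‖ = ‖W3 n y α 0 j j'‖ := by
  by_cases h : j = j'
  · simp [W3, h]
  · simp [W3, h, Complex.norm_exp]

theorem norm_neg_four_mul_pi_mul_I_div {κ : ℝ} (hκ : 0 < κ) :
    ‖(-4 * Real.pi * Complex.I / κ : ℂ)‖ = 4 * Real.pi / κ := by
  simp [abs_of_pos hκ, abs_of_pos Real.pi_pos]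

theorem norm_X3 {κ : ℝ} (hκ : 0 < κ) : ‖X3 y α κ‖ = 4 * Real.pi * ‖W3 n y α 0‖ / κ := by
  have hW i j : ‖W3 n y α κ i j‖₊ = ‖W3 n y α 0 i j‖₊ := NNReal.eq (norm_W3_apply y α κ i j)
  have hWκ : ‖W3 n y α κ‖ = ‖W3 n y α 0‖ := by simp only [Matrix.linfty_opNorm_def, hW]
  rw [X3, norm_smul, norm_neg_four_mul_pi_mul_I_div hκ, hWκ, div_mul_eq_mul_div]

theorem f3_add_sum_eq {κ : ℝ} (hκ : κ ≠ 0) (h : IsUnit (1 - X3 y α κ))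
    (M : ℕ) (k ℓ : EuclideanSpace ℝ (Fin 3)) :
    f3 n y α κ k ℓ + Complex.I / (2 * (Real.pi : ℂ) ^ 2) *
        ∑ m ∈ range (M + 1),
          (-4 * (Real.pi : ℂ) * Complex.I) ^ m * C3coef n y α κ m k ℓ / (κ : ℂ) ^ (m + 1) =
      ((2 * Real.pi : ℂ) ^ 3)⁻¹ * (-4 * Real.pi * Complex.I / κ) *
        ((Ring.inverse (1 - X3 y α κ) - ∑ m ∈ range (M + 1), X3 y α κ ^ m) *ᵥ
          planeWave y k ⬝ᵥ planeWave y (-ℓ)) := by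
  have hterm (m : ℕ) (z : ℂ) :
      Complex.I / (2 * (Real.pi : ℂ) ^ 2) *
        ((-4 * (Real.pi : ℂ) * Complex.I) ^ m * z / (κ : ℂ) ^ (m + 1)) =
      -(((2 * Real.pi : ℂ) ^ 3)⁻¹ * (-4 * Real.pi * Complex.I / κ) *
        ((-4 * Real.pi * Complex.I / κ) ^ m * z)) := by
    have hπ : (Real.pi : ℂ) ≠ 0 := by exact_mod_cast Real.pi_ne_zero
    have hκ' : (κ : ℂ) ≠ 0 := by exact_mod_cast hκ
    rw [div_pow]
    field_simp
    ring
  rw [f3_eq_dotProduct, Matrix.inv_eq_left_inv (smul_inverse_one_sub_X3_mul_A3 y α hκ h)]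
  simp only [X3, C3coef_eq_dotProduct, sub_mulVec, sub_dotProduct, sum_mulVec, sum_dotProduct,
    smul_pow, smul_mulVec, smul_dotProduct, smul_eq_mul]
  rw [mul_sum, sum_congr rfl fun m _ => hterm m _, sum_neg_distrib, mul_sub, mul_sum]
  ring

theorem norm_f3_add_sum_le {κ : ℝ} (hκ : 0 < κ) (hX : ‖X3 y α κ‖ ≤ 1 / 2)
    (M : ℕ) (k ℓ : EuclideanSpace ℝ (Fin 3)) :
    ‖f3 n y α κ k ℓ + Complex.I / (2 * (Real.pi : ℂ) ^ 2) *
        ∑ m ∈ range (M + 1),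
          (-4 * (Real.pi : ℂ) * Complex.I) ^ m * C3coef n y α κ m k ℓ / (κ : ℂ) ^ (m + 1)‖ ≤
      ((2 * Real.pi) ^ 3)⁻¹ * (4 * Real.pi / κ) *
        (n * (‖X3 y α κ‖ ^ (M + 1) * (‖(1 : Matrix (Fin n) (Fin n) ℂ)‖ + 1))) := by
  have hX1 : ‖X3 y α κ‖ < 1 := by linarith
  have hremainder : ‖Ring.inverse (1 - X3 y α κ) - ∑ m ∈ range (M + 1), X3 y α κ ^ m‖ ≤
      ‖X3 y α κ‖ ^ (M + 1) * (‖(1 : Matrix (Fin n) (Fin n) ℂ)‖ + 1) := by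
    have hinv : (1 - ‖X3 y α κ‖)⁻¹ ≤ 2 := inv_le_of_inv_le₀ two_pos (by linarith)
    refine (NormedRing.norm_inverse_one_sub_sub_geom_sum_le hX1 (M + 1)).trans ?_
    gcongr ‖X3 y α κ‖ ^ (M + 1) * ?_
    linarith
  have hc : ‖((2 * Real.pi : ℂ) ^ 3)⁻¹‖ = ((2 * Real.pi) ^ 3)⁻¹ := by
    simp [abs_of_pos Real.pi_pos]
  rw [f3_add_sum_eq y α hκ.ne' (Units.oneSub _ hX1).isUnit, norm_mul, norm_mul, hc,
    norm_neg_four_mul_pi_mul_I_div hκ]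
  gcongr
  exact (norm_mulVec_planeWave_dotProduct_le y _ k (-ℓ)).trans (by gcongr)

theorem stmt5_general (n : ℕ) (y : Fin n → EuclideanSpace ℝ (Fin 3)) (α : Fin n → ℂ)
    (M : ℕ) :
    ∃ C > (0 : ℝ), ∃ κ₀ > (0 : ℝ), ∀ κ ≥ κ₀, IsUnit (A3 n y α κ) ∧
      ∀ k ℓ : EuclideanSpace ℝ (Fin 3), ‖k‖ = κ → ‖ℓ‖ = κ →
        ‖f3 n y α κ k ℓ +
            Complex.I / (2 * (Real.pi : ℂ) ^ 2) *
              ∑ m ∈ Finset.range (M + 1),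
                (-4 * (Real.pi : ℂ) * Complex.I) ^ m *
                  C3coef n y α κ m k ℓ / (κ : ℂ) ^ (m + 1)‖ ≤
          C / κ ^ (M + 2) := by
  set L := ‖W3 n y α 0‖
  set K := ((2 * Real.pi) ^ 3)⁻¹ * (4 * Real.pi) * n * (4 * Real.pi * L) ^ (M + 1) *
    (‖(1 : Matrix (Fin n) (Fin n) ℂ)‖ + 1)
  refine ⟨K + 1, by positivity, 8 * Real.pi * (L + 1), by positivity, fun κ hκ => ?_⟩
  have hκ0 : 0 < κ := lt_of_lt_of_le (by positivity) hκ
  have hX : ‖X3 y α κ‖ ≤ 1 / 2 := by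
    rw [norm_X3 y α hκ0, div_le_iff₀ hκ0]
    nlinarith [Real.pi_pos]
  refine ⟨isUnit_A3 y α hκ0.ne' (by linarith), fun k ℓ _ _ => ?_⟩
  calc _ ≤ _ := norm_f3_add_sum_le y α hκ0 hX M k ℓ
    _ = K / κ ^ (M + 2) := by
      simp only [norm_X3 y α hκ0, K, div_pow]
      field_simp
      ring
    _ ≤ (K + 1) / κ ^ (M + 2) := by gcongr; linarith

/-- Theorem 3.3(iii): full high-energy expansion of the scattering amplitude, d = 3. -/
theorem stmt5 (n : ℕ) (y : Fin n → EuclideanSpace ℝ (Fin 3)) (α : Fin n → ℂ)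
    (hy : Function.Injective y) (M : ℕ) :
    ∃ C > (0 : ℝ), ∃ κ₀ > (0 : ℝ), ∀ κ ≥ κ₀, IsUnit (A3 n y α κ) ∧
      ∀ k ℓ : EuclideanSpace ℝ (Fin 3), ‖k‖ = κ → ‖ℓ‖ = κ →
        ‖f3 n y α κ k ℓ +
            Complex.I / (2 * (Real.pi : ℂ) ^ 2) *
              ∑ m ∈ Finset.range (M + 1),
                (-4 * (Real.pi : ℂ) * Complex.I) ^ m *
                  C3coef n y α κ m k ℓ / (κ : ℂ) ^ (m + 1)‖ ≤
          C / κ ^ (M + 2) :=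
  stmt5_general n y α M

end Scattering
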